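/- Hypotheses under which Fermat's symmetric theorem is completed via the intermediate value theorem: let f be continuous on [a,b] with a local maximum at t₀ ∈ (a,b), and suppose γ > 0 satisfies t₀±γ ∈ [a,b], f(t₀) > f(t₀-γ) > f(t₀+γ). Then there exists ρ with 0 < ρ < γ such that f(t₀+ρ) = f(t₀-γ), hence D_{ρ,γ}[f](t₀) = 0. -/

import Mathlib

theorem symm_fermat_ivt_step_general (a b : ℝ) (f : ℝ → ℝ)
    (hf : ContinuousOn f (Set.Icc a b)) (t₀ : ℝ) (ht₀ : t₀ ∈ Set.Ioo a b)
    (γ : ℝ) (hγ : 0 < γ) (h₁ : t₀ + γ ∈ Set.Icc a b)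
    (h₃ : f (t₀ - γ) < f t₀) (h₄ : f (t₀ + γ) < f (t₀ - γ)) :
    ∃ ρ : ℝ, 0 < ρ ∧ ρ < γ ∧ f (t₀ + ρ) = f (t₀ - γ) ∧
      (f (t₀ + ρ) - f (t₀ - γ)) / (ρ + γ) = 0 := by
  have hsub : Set.Icc t₀ (t₀ + γ) ⊆ Set.Icc a b := Set.Icc_subset_Icc ht₀.1.le h₁.2
  obtain ⟨s, ⟨hts, hsγ⟩, hfs⟩ :=
    intermediate_value_Ioo' (by linarith) (hf.mono hsub) ⟨h₄, h₃⟩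
  have hρ : f (t₀ + (s - t₀)) = f (t₀ - γ) := by rw [add_sub_cancel, hfs]
  exact ⟨s - t₀, by linarith, by linarith, hρ, by rw [hρ, sub_self, zero_div]⟩

theorem symm_fermat_ivt_step (a b : ℝ) (hab : a < b) (f : ℝ → ℝ)
    (hf : ContinuousOn f (Set.Icc a b)) (t₀ : ℝ) (ht₀ : t₀ ∈ Set.Ioo a b)
    (hmax : IsLocalMaxOn f (Set.Icc a b) t₀)
    (γ : ℝ) (hγ : 0 < γ) (h₁ : t₀ + γ ∈ Set.Icc a b) (h₂ : t₀ - γ ∈ Set.Icc a b)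
    (h₃ : f (t₀ - γ) < f t₀) (h₄ : f (t₀ + γ) < f (t₀ - γ))
    (h₅ : ∀ x ∈ Set.Icc (0 : ℝ) γ, f (t₀ + x) ≤ f t₀) :
    ∃ ρ : ℝ, 0 < ρ ∧ ρ < γ ∧ f (t₀ + ρ) = f (t₀ - γ) ∧
      (f (t₀ + ρ) - f (t₀ - γ)) / (ρ + γ) = 0 :=
  symm_fermat_ivt_step_general a b f hf t₀ ht₀ γ hγ h₁ h₃ h₄
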